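/- arXiv:2311.13651 — 6 statements merged into one kernel-verified Lean document; each statement's English description precedes it below -/
import Mathlib

section
/- Let G be a δ-hyperbolic group with word length ℓ, and let k,m,n be positive integers with |m-n| ≤ k. Set p = n+k-m. Suppose x ∈ G with ℓ(x)=m is decomposed as x = x₁x₂ with ℓ(x₁) = k - ⌈p/2⌉ and ℓ(x₂) = n - ⌊p/2⌋. If y,z ∈ G satisfy yz = x, ℓ(y) = k, ℓ(z) = n, and u := y⁻¹x₁, then ⌈p/2⌉ ≤ ℓ(u) ≤ ⌈p/2⌉ + δ. -/
/-- A word length on a group `G`. -/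
structure IsWordLength {G : Type*} [Group G] (ℓ : G → ℕ) : Prop where
  len_one : ℓ 1 = 0
  eq_one_of_len_zero : ∀ x, ℓ x = 0 → x = 1
  len_inv : ∀ x, ℓ x⁻¹ = ℓ x
  len_mul : ∀ x y, ℓ (x * y) ≤ ℓ x + ℓ y

/-- The four-point δ-hyperbolicity condition for the left-invariant word metric
`d(g,h) = ℓ(g⁻¹h)`. -/
def IsHyperbolic {G : Type*} [Group G] (ℓ : G → ℕ) (δ : ℕ) : Prop :=
  ∀ x y z w : G,
    ℓ (x⁻¹ * y) + ℓ (z⁻¹ * w) ≤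
      max (ℓ (x⁻¹ * z) + ℓ (y⁻¹ * w)) (ℓ (x⁻¹ * w) + ℓ (y⁻¹ * z)) + δ

/-- if `x = x₁x₂` with `ℓ(x₁) = k - ⌈p/2⌉`, `ℓ(x₂) = n - ⌊p/2⌋`
(where `p = n + k - m`), `yz = x` with `ℓ(y) = k`, `ℓ(z) = n`, then
`⌈p/2⌉ ≤ ℓ(y⁻¹x₁) ≤ ⌈p/2⌉ + δ`. -/
theorem stmt_1 {G : Type*} [Group G] (ℓ : G → ℕ) (hℓ : IsWordLength ℓ)
    (δ : ℕ) (hhyp : IsHyperbolic ℓ δ)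
    (k m n : ℕ) (hk : 0 < k) (hm : 0 < m) (hn : 0 < n)
    (hmn : m ≤ n + k) (hnm : n ≤ m + k)
    (x x₁ x₂ y z : G)
    (hx : ℓ x = m) (hdec : x = x₁ * x₂)
    (hx1 : ℓ x₁ = k - (n + k - m + 1) / 2)
    (hx2 : ℓ x₂ = n - (n + k - m) / 2)
    (hyz : y * z = x) (hy : ℓ y = k) (hz : ℓ z = n) :
    (n + k - m + 1) / 2 ≤ ℓ (y⁻¹ * x₁) ∧
      ℓ (y⁻¹ * x₁) ≤ (n + k - m + 1) / 2 + δ := by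
  have huv : ℓ (x₁⁻¹ * y) = ℓ (y⁻¹ * x₁) := by
    rw [← hℓ.len_inv]; congr 1; group
  have h1 : ℓ y ≤ ℓ x₁ + ℓ (y⁻¹ * x₁) := by
    calc ℓ y = ℓ (x₁ * (x₁⁻¹ * y)) := by congr 1; group
    _ ≤ ℓ x₁ + ℓ (x₁⁻¹ * y) := hℓ.len_mul _ _
    _ = ℓ x₁ + ℓ (y⁻¹ * x₁) := by rw [huv]
  have hkmn : k ≤ m + n := by
    have hxy : y = x * z⁻¹ := by rw [← hyz]; group
    calc k = ℓ y := hy.symm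
    _ = ℓ (x * z⁻¹) := by rw [hxy]
    _ ≤ ℓ x + ℓ z⁻¹ := hℓ.len_mul _ _
    _ = m + n := by rw [hℓ.len_inv, hx, hz]
  have hhyp' := hhyp y x₁ 1 x
  have e1 : ℓ ((1:G)⁻¹ * x) = m := by simpa using hx
  have e2 : ℓ (y⁻¹ * (1:G)) = k := by
    rw [mul_one, hℓ.len_inv, hy]
  have e3 : ℓ (x₁⁻¹ * x) = ℓ x₂ := by
    rw [hdec]; congr 1; group
  have e4 : ℓ (y⁻¹ * x) = n := by
    have : y⁻¹ * x = z := by rw [← hyz]; group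
    rw [this, hz]
  have e5 : ℓ (x₁⁻¹ * (1:G)) = ℓ x₁ := by
    rw [mul_one, hℓ.len_inv]
  rw [e1, e2, e3, e4, e5] at hhyp'
  rcases max_choice (k + ℓ x₂) (n + ℓ x₁) with h | h <;>
    rw [h] at hhyp' <;> rw [hx1, hx2] at * <;> omega
end

section
/- Let G be a δ-hyperbolic group with word length ℓ, and let k,m,n be positive integers with |m-n| ≤ k; set p = n+k-m. Then for any x ∈ G with ℓ(x) = m, the number of pairs (x₁,x₂) with ℓ(x₁) = k - ⌈p/2⌉, ℓ(x₂) = n - ⌊p/2⌋, and x₁x₂ = x is at most the cardinality of the ball B_δ = {g ∈ G : ℓ(g) ≤ δ}. -/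
/-- in a δ-hyperbolic finitely generated group, for `x` with `ℓ(x) = m`
the number of factorizations `x = x₁x₂` with `ℓ(x₁) = k - ⌈p/2⌉` and
`ℓ(x₂) = n - ⌊p/2⌋` (`p = n + k - m`) is at most `#B_δ`. -/
theorem stmt_2 {G : Type*} [Group G] (ℓ : G → ℕ) (hℓ : IsWordLength ℓ)
    (hfin : ∀ s : ℕ, {g : G | ℓ g ≤ s}.Finite)
    (δ : ℕ) (hhyp : IsHyperbolic ℓ δ)
    (k m n : ℕ) (hk : 0 < k) (hm : 0 < m) (hn : 0 < n)
    (hmn : m ≤ n + k) (hnm : n ≤ m + k)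
    (x : G) (hx : ℓ x = m) :
    {q : G × G | ℓ q.1 = k - (n + k - m + 1) / 2 ∧
        ℓ q.2 = n - (n + k - m) / 2 ∧ q.1 * q.2 = x}.ncard ≤
      {g : G | ℓ g ≤ δ}.ncard := by
  set r := k - (n + k - m + 1) / 2 with hr
  set s := n - (n + k - m) / 2 with hs
  set S := {q : G × G | ℓ q.1 = r ∧ ℓ q.2 = s ∧ q.1 * q.2 = x} with hSdef
  have hball : {g : G | ℓ g ≤ δ}.Finite := hfin δ
  have hball1 : 1 ≤ {g : G | ℓ g ≤ δ}.ncard := by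
    rw [Nat.one_le_iff_ne_zero, ← Nat.pos_iff_ne_zero, Set.ncard_pos hball]
    exact ⟨1, by simp [hℓ.len_one]⟩
  rcases Set.eq_empty_or_nonempty S with hE | ⟨⟨a, b⟩, hla, hlb, hab⟩
  · simp [hE]
  have hcases : r = 0 ∨ s = 0 ∨ r + s = m := by omega
  rcases hcases with h0 | h0 | hrs
  · -- r = 0 : every element of S is (1, x)
    have hsub : S ⊆ {((1 : G), x)} := by
      rintro ⟨c, d⟩ ⟨hc, hd, hcd⟩
      have hc1 : c = 1 := hℓ.eq_one_of_len_zero c (by rw [hc, h0])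
      subst hc1
      simp_all
    calc S.ncard ≤ ({((1 : G), x)} : Set (G × G)).ncard :=
          Set.ncard_le_ncard hsub (Set.finite_singleton _)
      _ = 1 := Set.ncard_singleton _
      _ ≤ _ := hball1
  · -- s = 0 : every element of S is (x, 1)
    have hsub : S ⊆ {(x, (1 : G))} := by
      rintro ⟨c, d⟩ ⟨hc, hd, hcd⟩
      have hd1 : d = 1 := hℓ.eq_one_of_len_zero d (by rw [hd, h0])
      subst hd1
      simp_all
    calc S.ncard ≤ ({(x, (1 : G))} : Set (G × G)).ncard :=
          Set.ncard_le_ncard hsub (Set.finite_singleton _)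
      _ = 1 := Set.ncard_singleton _
      _ ≤ _ := hball1
  · -- main case : r + s = m
    have key : ∀ q ∈ S, ℓ (a⁻¹ * q.1) ≤ δ := by
      rintro ⟨c, d⟩ ⟨hc, hd, hcd⟩
      have h1 : a⁻¹ * x = b := by rw [← hab]; group
      have h2 : c⁻¹ * x = d := by rw [← hcd]; group
      have h4 := hhyp a c 1 x
      simp only [inv_one, one_mul, mul_one, h1, h2] at h4
      rw [hℓ.len_inv a, hℓ.len_inv c, hla, hlb, hc, hd, hx] at h4
      simp only [Nat.add_comm s r, max_self] at h4
      show ℓ (a⁻¹ * c) ≤ δ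
      omega
    have hinj : Set.InjOn (fun q : G × G => a⁻¹ * q.1) S := by
      rintro ⟨c, d⟩ ⟨hc, hd, hcd⟩ ⟨c', d'⟩ ⟨hc', hd', hcd'⟩ h
      have hcc : c = c' := mul_left_cancel h
      subst hcc
      have : d = d' := by
        have := hcd.trans hcd'.symm
        exact mul_left_cancel this
      simp [this]
    have himg : (fun q : G × G => a⁻¹ * q.1) '' S ⊆ {g : G | ℓ g ≤ δ} := by
      rintro g ⟨q, hq, rfl⟩
      exact key q hq
    calc S.ncard = ((fun q : G × G => a⁻¹ * q.1) '' S).ncard :=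
          (Set.ncard_image_of_injOn hinj).symm
      _ ≤ _ := Set.ncard_le_ncard himg hball
end

section
/- Let G be a δ-hyperbolic group with word length ℓ, let k,m,n be positive integers with |m-n| ≤ k, set p = n+k-m, and fix an integer s with 0 ≤ s ≤ δ. Then for any z ∈ G with ℓ(z) = n, the number of pairs (x₂, u) with ℓ(x₂) = n - ⌊p/2⌋, ℓ(u) = ⌈p/2⌉ + s, and u·x₂ = z is at most the cardinality of the ball B_{2δ+1} = {g ∈ G : ℓ(g) ≤ 2δ+1}. -/
/-- for `z` with `ℓ(z) = n`, the number of factorizations `z = u·x₂` with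
`ℓ(x₂) = n - ⌊p/2⌋`, `ℓ(u) = ⌈p/2⌉ + s` (`p = n + k - m`, `0 ≤ s ≤ δ`)
is at most `#B_{2δ+1}`. -/
theorem stmt_3 {G : Type*} [Group G] (ℓ : G → ℕ) (hℓ : IsWordLength ℓ)
    (hfin : ∀ s : ℕ, {g : G | ℓ g ≤ s}.Finite)
    (δ : ℕ) (hhyp : IsHyperbolic ℓ δ)
    (k m n : ℕ) (hk : 0 < k) (hm : 0 < m) (hn : 0 < n)
    (hmn : m ≤ n + k) (hnm : n ≤ m + k)
    (s : ℕ) (hs : s ≤ δ)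
    (z : G) (hz : ℓ z = n) :
    {q : G × G | ℓ q.1 = n - (n + k - m) / 2 ∧
        ℓ q.2 = (n + k - m + 1) / 2 + s ∧ q.2 * q.1 = z}.ncard ≤
      {g : G | ℓ g ≤ 2 * δ + 1}.ncard := by
  set b := n - (n + k - m) / 2 with hb
  set a := (n + k - m + 1) / 2 + s with ha
  set S : Set (G × G) := {q : G × G | ℓ q.1 = b ∧ ℓ q.2 = a ∧ q.2 * q.1 = z} with hS
  rcases S.eq_empty_or_nonempty with hSe | ⟨q₀, hq₀⟩
  · simp [hSe]
  · obtain ⟨h01, h02, h03⟩ := hq₀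
    apply Set.ncard_le_ncard_of_injOn (fun q => q₀.2⁻¹ * q.2) ?_ ?_ (hfin (2 * δ + 1))
    · intro q hq
      obtain ⟨hq1, hq2, hq3⟩ := hq
      show ℓ (q₀.2⁻¹ * q.2) ≤ 2 * δ + 1
      by_cases hcase : (n + k - m) / 2 ≤ n
      · have e2 : q.2⁻¹ * z = q.1 := by rw [← hq3]; group
        have e2' : q₀.2⁻¹ * z = q₀.1 := by rw [← h03]; group
        have l1 : ℓ (z⁻¹ * q.2) = b := by
          rw [← hℓ.len_inv]
          simp only [mul_inv_rev, inv_inv, e2, hq1]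
        have l2 : ℓ (z⁻¹ * q₀.2) = b := by
          rw [← hℓ.len_inv]
          simp only [mul_inv_rev, inv_inv, e2', h01]
        have h := hhyp 1 z q.2 q₀.2
        simp only [inv_one, one_mul] at h
        rw [hz, hq2, h02, l1, l2, max_self] at h
        have hlen : ℓ (q₀.2⁻¹ * q.2) = ℓ (q.2⁻¹ * q₀.2) := by
          rw [← hℓ.len_inv]; simp [mul_inv_rev]
        rw [hlen]
        omega
      · have hb0 : b = 0 := by omega
        have hq1' : q.1 = 1 := hℓ.eq_one_of_len_zero _ (by rw [hq1, hb0])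
        have h01' : q₀.1 = 1 := hℓ.eq_one_of_len_zero _ (by rw [h01, hb0])
        have : q.2 = q₀.2 := by
          rw [hq1', mul_one] at hq3
          rw [h01', mul_one] at h03
          rw [hq3, h03]
        rw [this, inv_mul_cancel, hℓ.len_one]
        omega
    · intro q hq q' hq' hf
      have h2 : q.2 = q'.2 := by
        have := mul_left_cancel (a := q₀.2⁻¹) hf
        exact this
      have h1 : q.1 = q'.1 := by
        have e : q.1 = q.2⁻¹ * z := by rw [← hq.2.2]; group
        have e' : q'.1 = q'.2⁻¹ * z := by rw [← hq'.2.2]; group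
        rw [e, e', h2]
      exact Prod.ext h1 h2
end

section
/- Let G be a finitely generated group with word length ℓ, k a positive integer, and f : G → ℂ supported on S_k. Then for any i,j ≥ 0, the Hilbert–Schmidt norm of the matrix M_{j,k-j}(f) = (f(y₁y₂⁻¹))_{y₁∈S_j, y₂∈S_{k-j}} satisfies ‖M_{j,k-j}(f)‖ ≤ ‖M_{j,k-j}(f)‖_{HS} ≤ C·‖f‖_{ℓ²}, where C² is the maximal number of factorizations x = y₁y₂ with y₁∈S_j, y₂∈S_{k-j} over x ∈ S_k. In particular, for the free group (where each x ∈ S_k has a unique such factorization), ‖M_{j,k-j}(f)‖ ≤ ‖f‖_{ℓ²}. -/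
open scoped InnerProductSpace

lemma lp_norm_sq_eq' {T : Type*} [Fintype T] (η : lp (fun _ : T => ℂ) 2) :
    ‖η‖ ^ 2 = ∑ i, ‖η i‖ ^ 2 := by
  have h2 : (2 : ENNReal).toReal = 2 := by simp
  have h := lp.norm_rpow_eq_tsum (p := 2) (by rw [h2]; norm_num) η
  rw [tsum_fintype, h2] at h
  calc ‖η‖ ^ 2 = ‖η‖ ^ (2:ℝ) := (Real.rpow_two _).symm
    _ = ∑ i, ‖η i‖ ^ (2:ℝ) := h
    _ = ∑ i, ‖η i‖ ^ 2 := by simp [Real.rpow_two]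


/-- for scalar `f` supported on `S_k`, the operator norm of
`M_{j,k-j}(f)` is dominated by its Hilbert–Schmidt norm, which is at most `C‖f‖₂`
where `C²` bounds the number of factorizations `x = y₁y₂` with `y₁ ∈ S_j`,
`y₂ ∈ S_{k-j}`; in particular if every `x ∈ S_k` has a unique such factorization
(e.g. the free group) then `‖M_{j,k-j}(f)‖ ≤ ‖f‖₂`. -/
theorem stmt_9 {G : Type*} [Group G] (ℓ : G → ℕ) (hℓ : IsWordLength ℓ)
    (hfin : ∀ s : ℕ, {g : G | ℓ g ≤ s}.Finite)
    (k : ℕ) (hk : 0 < k) (j : ℕ) (hj : j ≤ k)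
    (f : G → ℂ) (hfsupp : ∀ x, f x ≠ 0 → ℓ x = k)
    (M : lp (fun _ : {y : G // ℓ y = k - j} => ℂ) 2 →L[ℂ]
         lp (fun _ : {y : G // ℓ y = j} => ℂ) 2)
    (hM : ∀ (ξ : lp (fun _ : {y : G // ℓ y = k - j} => ℂ) 2)
      (y₁ : {y : G // ℓ y = j}),
      M ξ y₁ = ∑ᶠ y₂ : {y : G // ℓ y = k - j}, f ((y₁ : G) * (y₂ : G)⁻¹) * ξ y₂)
    (C : ℝ) (hC0 : 0 ≤ C)
    (hC : ∀ x : G, ℓ x = k →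
      ({q : G × G | ℓ q.1 = j ∧ ℓ q.2 = k - j ∧ q.1 * q.2 = x}.ncard : ℝ) ≤ C ^ 2) :
    ‖M‖ ≤ Real.sqrt (∑ᶠ y₁ : {y : G // ℓ y = j}, ∑ᶠ y₂ : {y : G // ℓ y = k - j},
        ‖f ((y₁ : G) * (y₂ : G)⁻¹)‖ ^ 2) ∧
    Real.sqrt (∑ᶠ y₁ : {y : G // ℓ y = j}, ∑ᶠ y₂ : {y : G // ℓ y = k - j},
        ‖f ((y₁ : G) * (y₂ : G)⁻¹)‖ ^ 2) ≤
      C * Real.sqrt (∑ᶠ x : G, ‖f x‖ ^ 2) ∧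
    ((∀ x : G, ℓ x = k →
        {q : G × G | ℓ q.1 = j ∧ ℓ q.2 = k - j ∧ q.1 * q.2 = x}.ncard = 1) →
      ‖M‖ ≤ Real.sqrt (∑ᶠ x : G, ‖f x‖ ^ 2)) := by
  classical
  haveI fin1 : Finite {y : G // ℓ y = j} :=
    ((hfin j).subset (fun g hg => le_of_eq hg)).to_subtype
  haveI fin2 : Finite {y : G // ℓ y = k - j} :=
    ((hfin (k - j)).subset (fun g hg => le_of_eq hg)).to_subtype
  haveI : Fintype {y : G // ℓ y = j} := Fintype.ofFinite _
  haveI : Fintype {y : G // ℓ y = k - j} := Fintype.ofFinite _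
  simp only [finsum_eq_sum_of_fintype]
  set S : ℝ := ∑ y₁ : {y : G // ℓ y = j}, ∑ y₂ : {y : G // ℓ y = k - j}, ‖f ((y₁ : G) * (y₂ : G)⁻¹)‖ ^ 2 with hS
  have hS0 : 0 ≤ S := by positivity
  -- Part 1 : ‖M‖ ≤ √S
  have part1 : ‖M‖ ≤ Real.sqrt S := by
    apply ContinuousLinearMap.opNorm_le_bound _ (Real.sqrt_nonneg _)
    intro ξ
    have hsq : ‖M ξ‖ ^ 2 ≤ S * ‖ξ‖ ^ 2 := by
      rw [lp_norm_sq_eq' (M ξ), lp_norm_sq_eq' ξ]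
      have hterm : ∀ y₁ : {y : G // ℓ y = j}, ‖(M ξ) y₁‖ ^ 2 ≤
          (∑ y₂ : {y : G // ℓ y = k - j}, ‖f ((y₁ : G) * (y₂ : G)⁻¹)‖ ^ 2) * ∑ y₂ : {y : G // ℓ y = k - j}, ‖ξ y₂‖ ^ 2 := by
        intro y₁
        rw [hM ξ y₁, finsum_eq_sum_of_fintype]
        calc ‖∑ y₂ : {y : G // ℓ y = k - j}, f ((y₁ : G) * (y₂ : G)⁻¹) * ξ y₂‖ ^ 2
            ≤ (∑ y₂ : {y : G // ℓ y = k - j}, ‖f ((y₁ : G) * (y₂ : G)⁻¹)‖ * ‖ξ y₂‖) ^ 2 := by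
              apply pow_le_pow_left₀ (norm_nonneg _)
              refine le_trans (norm_sum_le _ _) (le_of_eq ?_)
              simp [norm_mul]
          _ ≤ _ := Finset.sum_mul_sq_le_sq_mul_sq _ _ _
      calc ∑ y₁ : {y : G // ℓ y = j}, ‖(M ξ) y₁‖ ^ 2
          ≤ ∑ y₁ : {y : G // ℓ y = j}, (∑ y₂ : {y : G // ℓ y = k - j}, ‖f ((y₁ : G) * (y₂ : G)⁻¹)‖ ^ 2) * ∑ y₂ : {y : G // ℓ y = k - j}, ‖ξ y₂‖ ^ 2 :=
            Finset.sum_le_sum (fun y₁ _ => hterm y₁)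
        _ = S * ∑ y₂ : {y : G // ℓ y = k - j}, ‖ξ y₂‖ ^ 2 := by rw [hS, Finset.sum_mul]
    calc ‖M ξ‖ = Real.sqrt (‖M ξ‖ ^ 2) := (Real.sqrt_sq (norm_nonneg _)).symm
      _ ≤ Real.sqrt (S * ‖ξ‖ ^ 2) := Real.sqrt_le_sqrt hsq
      _ = Real.sqrt S * ‖ξ‖ := by
          rw [Real.sqrt_mul hS0, Real.sqrt_sq (norm_nonneg _)]
  -- the finite support finset
  set s : Finset G := (hfin k).toFinset with hs
  have hsupp : Function.support (fun x : G => ‖f x‖ ^ 2) ⊆ ↑s := by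
    intro x hx
    have hfx : f x ≠ 0 := by
      intro h0
      apply hx
      simp [h0]
    simp only [hs, Set.Finite.coe_toFinset, Set.mem_setOf_eq]
    exact le_of_eq (hfsupp x hfx)
  rw [finsum_eq_finset_sum_of_support_subset _ hsupp]
  -- Part 2 (general in C')
  have part2 : ∀ C' : ℝ, 0 ≤ C' →
      (∀ x : G, ℓ x = k →
        ({q : G × G | ℓ q.1 = j ∧ ℓ q.2 = k - j ∧ q.1 * q.2 = x}.ncard : ℝ) ≤ C' ^ 2) →
      Real.sqrt S ≤ C' * Real.sqrt (∑ x ∈ s, ‖f x‖ ^ 2) := by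
    intro C' hC'0 hC'
    have hSle : S ≤ C' ^ 2 * ∑ x ∈ s, ‖f x‖ ^ 2 := by
      have hprod : S = ∑ p : {y : G // ℓ y = j} × {y : G // ℓ y = k - j}, ‖f ((p.1 : G) * (p.2 : G)⁻¹)‖ ^ 2 := by
        rw [hS, Fintype.sum_prod_type]
      rw [hprod]
      rw [Finset.sum_comp (fun x : G => ‖f x‖ ^ 2) (fun p : {y : G // ℓ y = j} × {y : G // ℓ y = k - j} => (p.1 : G) * (p.2 : G)⁻¹)]
      set img := Finset.image (fun p : {y : G // ℓ y = j} × {y : G // ℓ y = k - j} => (p.1 : G) * (p.2 : G)⁻¹) Finset.univ with himg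
      have hcard : ∀ x : G,
          ((Finset.univ.filter (fun p : {y : G // ℓ y = j} × {y : G // ℓ y = k - j} => (p.1 : G) * (p.2 : G)⁻¹ = x)).card : ℝ)
          = ({q : G × G | ℓ q.1 = j ∧ ℓ q.2 = k - j ∧ q.1 * q.2 = x}.ncard : ℝ) := by
        intro x
        set φ : {y : G // ℓ y = j} × {y : G // ℓ y = k - j} → G × G := fun p => ((p.1 : G), (p.2 : G)⁻¹) with hφ
        have hφinj : Function.Injective φ := by
          rintro ⟨a1, a2⟩ ⟨b1, b2⟩ h
          simp only [hφ, Prod.mk.injEq] at h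
          have h1 : a1 = b1 := Subtype.ext h.1
          have h2 : a2 = b2 := Subtype.ext (inv_injective h.2)
          rw [h1, h2]
        have hset : {q : G × G | ℓ q.1 = j ∧ ℓ q.2 = k - j ∧ q.1 * q.2 = x}
            = φ '' ↑(Finset.univ.filter (fun p : {y : G // ℓ y = j} × {y : G // ℓ y = k - j} => (p.1 : G) * (p.2 : G)⁻¹ = x)) := by
          ext ⟨a, b⟩
          simp only [Set.mem_setOf_eq, Set.mem_image, Finset.coe_filter, Finset.mem_univ,
            true_and, Set.mem_setOf_eq, hφ, Prod.mk.injEq, Prod.exists]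
          constructor
          · rintro ⟨h1, h2, h3⟩
            refine ⟨⟨a, h1⟩, ⟨b⁻¹, by rw [hℓ.len_inv]; exact h2⟩, ?_, rfl, by simp⟩
            simpa using h3
          · rintro ⟨y₁, y₂, hmul, rfl, hb⟩
            refine ⟨y₁.2, ?_, ?_⟩
            · rw [← hb, hℓ.len_inv]; exact y₂.2
            · rw [← hb]; exact hmul
        rw [hset, Set.ncard_image_of_injective _ hφinj, Set.ncard_coe_finset]
      calc ∑ x ∈ img,
            (Finset.univ.filter (fun p : {y : G // ℓ y = j} × {y : G // ℓ y = k - j} => (p.1 : G) * (p.2 : G)⁻¹ = x)).card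
              • ‖f x‖ ^ 2
          ≤ ∑ x ∈ img, C' ^ 2 * ‖f x‖ ^ 2 := by
            apply Finset.sum_le_sum
            intro x _
            rw [nsmul_eq_mul]
            by_cases hfx : f x = 0
            · simp [hfx]
            · have hx := hfsupp x hfx
              have := hC' x hx
              rw [hcard x]
              exact mul_le_mul_of_nonneg_right this (by positivity)
        _ = C' ^ 2 * ∑ x ∈ img, ‖f x‖ ^ 2 := by rw [Finset.mul_sum]
        _ ≤ C' ^ 2 * ∑ x ∈ s, ‖f x‖ ^ 2 := by
            apply mul_le_mul_of_nonneg_left _ (by positivity)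
            have heq : ∑ x ∈ img ∩ s, ‖f x‖ ^ 2 = ∑ x ∈ img, ‖f x‖ ^ 2 := by
              apply Finset.sum_subset Finset.inter_subset_left
              intro x hx hnx
              have : x ∉ (↑s : Set G) := by
                intro hxs
                exact hnx (Finset.mem_inter.mpr ⟨hx, by exact_mod_cast hxs⟩)
              have hfx : f x = 0 := by
                by_contra h0
                exact this (hsupp (by simp [h0]))
              simp [hfx]
            rw [← heq]
            exact Finset.sum_le_sum_of_subset_of_nonneg Finset.inter_subset_right
              (fun x _ _ => by positivity)
    calc Real.sqrt S ≤ Real.sqrt (C' ^ 2 * ∑ x ∈ s, ‖f x‖ ^ 2) := Real.sqrt_le_sqrt hSle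
      _ = C' * Real.sqrt (∑ x ∈ s, ‖f x‖ ^ 2) := by
          rw [Real.sqrt_mul (by positivity), Real.sqrt_sq hC'0]
  refine ⟨part1, part2 C hC0 hC, fun huniq => ?_⟩
  have h1 : ∀ x : G, ℓ x = k →
      ({q : G × G | ℓ q.1 = j ∧ ℓ q.2 = k - j ∧ q.1 * q.2 = x}.ncard : ℝ) ≤ (1:ℝ) ^ 2 := by
    intro x hx
    rw [huniq x hx]
    norm_num
  have := part2 1 zero_le_one h1
  rw [one_mul] at this
  exact le_trans part1 this
end

section
/- There is no pair (d, C) of a positive integer d and constant C > 0 such that for all Hilbert spaces H and all finitely supported f : F_2 → B(H), ‖Σ_x λ(x)⊗f(x)‖ ≤ C(‖Σ_x (1+ℓ(x))^{2d} f(x)*f(x)‖^{1/2} + ‖Σ_x (1+ℓ(x))^{2d} f(x)f(x)*‖^{1/2}). Specifically, taking T_k the set of length-k reduced words starting with a and not ending with a⁻¹, t = #T_k, and f supported on S_{2k} with f(g_i g_j) = E_{i,j} for an enumeration g_1,…,g_t of T_k, the left side is at least t ≥ 2^k while the right side equals 2C(1+2k)^d √t. -/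
/-!
Let `g : ι → G` have pairwise distinct products `g v * g w`, let `b` be an orthonormal basis of `E`,
and put `f (g v * g w) = |b v⟩⟨b w|`, `f = 0` elsewhere. Then `∑ f(x)* f(x)` and `∑ f(x) f(x)*` are
both `#ι • 1`, whereas pairing `T = ∑ λ(x) ⊗ f(x)` between `∑_w δ_{(g w)⁻¹} ⊗ b w` and
`∑_v δ_{g v} ⊗ b v`, two vectors of norm `√#ι`, gives `#ι²`: by unique factorisation only the
term `f (g v * g w)` reaches `g v` from `(g w)⁻¹`. Hence `‖T‖ ≥ #ι`. In `F₂` the `2 ^ k` words of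
length `k` in the positive letters have distinct products, all of length `2k`, so the inequality
would give `2 ^ k ≤ 2C (1 + 2k) ^ d 2 ^ (k / 2)`, which fails for large `k`.
-/

open Function InnerProductSpace Filter ContinuousLinearMap

section LambdaTensor

variable {𝕜 : Type*} [NontriviallyNormedField 𝕜] {α β : Type*} {E F : Type*}
  [NormedAddCommGroup E] [NormedSpace 𝕜 E] [NormedAddCommGroup F] [NormedSpace 𝕜 F]

lemma memℓp_two_map_comp_injective {e : β → α} (he : Injective e) (A : E →L[𝕜] F)
    (ξ : lp (fun _ : α => E) 2) : Memℓp (fun i => A (ξ (e i))) 2 := by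
  have hξ : Memℓp (fun i => ‖ξ (e i)‖) 2 :=
    memℓp_gen (((lp.memℓp ξ).summable (by norm_num)).comp_injective he) |>.norm
  exact (hξ.const_mul ‖A‖).mono fun i => A.le_opNorm _

lemma norm_le_of_eq_map_comp_injective {e : β → α} (he : Injective e) (A : E →L[𝕜] F)
    (ξ : lp (fun _ : α => E) 2) (ζ : lp (fun _ : β => F) 2) (hζ : ∀ i, ζ i = A (ξ (e i))) :
    ‖ζ‖ ≤ ‖A‖ * ‖ξ‖ := by
  refine lp.norm_le_of_forall_sum_le (by norm_num) (by positivity) fun s => ?_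
  rw [ENNReal.toReal_ofNat]
  calc ∑ i ∈ s, ‖ζ i‖ ^ (2 : ℝ) ≤ ∑ i ∈ s, ‖A‖ ^ (2 : ℝ) * ‖ξ (e i)‖ ^ (2 : ℝ) := by
        gcongr with i
        rw [hζ, ← Real.mul_rpow (by positivity) (by positivity)]
        gcongr
        exact A.le_opNorm _
    _ = ‖A‖ ^ (2 : ℝ) * ∑ j ∈ s.map ⟨e, he⟩, ‖ξ j‖ ^ (2 : ℝ) := by
        rw [Finset.sum_map, Finset.mul_sum]; rfl
    _ ≤ ‖A‖ ^ (2 : ℝ) * ‖ξ‖ ^ (2 : ℝ) := by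
        gcongr
        simpa only [ENNReal.toReal_ofNat] using
          lp.sum_rpow_le_norm_rpow (p := 2) (by norm_num) ξ (s.map ⟨e, he⟩)
    _ = (‖A‖ * ‖ξ‖) ^ (2 : ℝ) := (Real.mul_rpow (by positivity) (by positivity)).symm

variable {G : Type*} [Group G]

noncomputable def lambdaTensor (x : G) (A : E →L[𝕜] F) :
    lp (fun _ : G => E) 2 →L[𝕜] lp (fun _ : G => F) 2 :=
  LinearMap.mkContinuous
    { toFun ξ := ⟨fun g => A (ξ (x⁻¹ * g)),
        memℓp_two_map_comp_injective (mul_right_injective x⁻¹) A ξ⟩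
      map_add' ξ ζ := by ext g; simp; rfl
      map_smul' c ξ := by ext g; simp [lp.coeFn_smul] }
    ‖A‖ fun ξ => norm_le_of_eq_map_comp_injective (mul_right_injective x⁻¹) A ξ _ fun _ => rfl

lemma exists_lambdaTensor_sum {f : G → E →L[𝕜] F} (hf : (support f).Finite) :
    ∃ T : lp (fun _ : G => E) 2 →L[𝕜] lp (fun _ : G => F) 2,
      ∀ ξ g, T ξ g = ∑ᶠ x, f x (ξ (x⁻¹ * g)) := by
  refine ⟨∑ x ∈ hf.toFinset, lambdaTensor x (f x), fun ξ g => ?_⟩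
  rw [finsum_eq_sum_of_support_subset _ (s := hf.toFinset) fun x hx => ?_]
  · rw [sum_apply, lp.coeFn_sum, Finset.sum_apply]
    rfl
  · exact hf.mem_toFinset.2 fun h => hx (by simp [h])

end LambdaTensor

section SumSingle

variable {G ι : Type*} [DecidableEq G] [Fintype ι]

lemma sum_lpSingle_apply {E : Type*} [NormedAddCommGroup E] {e : ι → G} (he : Injective e)
    (a : ι → E) (j : ι) :
    (∑ i, lp.single 2 (e i) (a i) : lp (fun _ : G => E) 2) (e j) = a j := by
  rw [lp.coeFn_sum, Finset.sum_apply,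
    Finset.sum_eq_single j (fun i _ hi => lp.single_apply_ne _ _ _ (he.ne hi.symm)) (by simp),
    lp.single_apply_self]

variable {E : Type*} [NormedAddCommGroup E] [InnerProductSpace ℂ E]

lemma inner_sum_lpSingle_left (e : ι → G) (a : ι → E) (ζ : lp (fun _ : G => E) 2) :
    inner ℂ (∑ i, lp.single 2 (e i) (a i)) ζ = ∑ i, inner ℂ (a i) (ζ (e i)) := by
  simp [lp.inner_single_left]

lemma norm_sum_lpSingle_orthonormalBasis {e : ι → G} (he : Injective e)
    (b : OrthonormalBasis ι ℂ E) :
    ‖(∑ i, lp.single 2 (e i) (b i) : lp (fun _ : G => E) 2)‖ = √(Fintype.card ι) := by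
  rw [← sq_eq_sq₀ (norm_nonneg _) (Real.sqrt_nonneg _), Real.sq_sqrt (Nat.cast_nonneg _),
    norm_sq_eq_re_inner (𝕜 := ℂ), inner_sum_lpSingle_left]
  simp only [sum_lpSingle_apply he, b.inner_eq_one]
  simp

end SumSingle

lemma finsum_eq_sum_of_support_subset_range {ι G M : Type*} [Fintype ι] [AddCommMonoid M]
    {e : ι → G} (he : Injective e) {φ : G → M} (hφ : support φ ⊆ Set.range e) :
    ∑ᶠ x, φ x = ∑ i, φ (e i) := by
  rw [← finsum_eq_sum_of_fintype, ← finsum_mem_range he, finsum_mem_def,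
    Set.indicator_eq_self.2 hφ]

section MatrixUnitSymbol

variable {G : Type*} [Group G] {ι : Type*} [Fintype ι]
  {E : Type*} [NormedAddCommGroup E] [InnerProductSpace ℂ E]

noncomputable def matrixUnitSymbol (b : OrthonormalBasis ι ℂ E) (g : ι → G) :
    G → E →L[ℂ] E :=
  extend (fun p : ι × ι => g p.1 * g p.2) (fun p => rankOne ℂ (b p.1) (b p.2)) 0

lemma finite_support_matrixUnitSymbol (b : OrthonormalBasis ι ℂ E) (g : ι → G) :
    (support (matrixUnitSymbol b g)).Finite :=
  ((Set.toFinite _).image _).subset support_extend_zero_subset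

variable (b : OrthonormalBasis ι ℂ E) {g : ι → G}
  (hg : Injective fun p : ι × ι => g p.1 * g p.2)
include hg

omit [Fintype ι] [NormedAddCommGroup E] [InnerProductSpace ℂ E] in
lemma injective_of_injective_mul_pair : Injective g := fun v v' h =>
  congrArg Prod.fst (@hg (v, v) (v', v) (by simp [h]))

lemma finsum_matrixUnitSymbol {M : Type*} [AddCommMonoid M] (φ : G → (E →L[ℂ] E) → M)
    (hφ : ∀ x, φ x 0 = 0) :
    ∑ᶠ x, φ x (matrixUnitSymbol b g x) =
      ∑ p : ι × ι, φ (g p.1 * g p.2) (rankOne ℂ (b p.1) (b p.2)) := by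
  rw [finsum_eq_sum_of_support_subset_range hg]
  · simp only [matrixUnitSymbol, hg.extend_apply]
  · refine support_subset_iff'.2 fun x hx => ?_
    rw [matrixUnitSymbol, extend_apply' _ _ _ fun ⟨p, hp⟩ => hx ⟨p, hp⟩, Pi.zero_apply, hφ]

lemma finsum_smul_adjoint_comp_matrixUnitSymbol [CompleteSpace E] (ω : G → ℝ) {c : ℝ}
    (hω : ∀ v w, ω (g v * g w) = c) :
    ∑ᶠ x, ω x • (adjoint (matrixUnitSymbol b g x)).comp (matrixUnitSymbol b g x) =
      (c * Fintype.card ι) • ContinuousLinearMap.id ℂ E := by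
  rw [finsum_matrixUnitSymbol b hg (fun x A => ω x • (adjoint A).comp A) fun x => by simp]
  simp only [adjoint_rankOne, rankOne_comp_rankOne, b.inner_eq_one, one_smul, hω,
    Fintype.sum_prod_type, Finset.sum_const, Finset.card_univ, ← Finset.smul_sum,
    b.sum_rankOne_eq_id, smul_smul, ← Nat.cast_smul_eq_nsmul ℝ]

lemma finsum_smul_comp_adjoint_matrixUnitSymbol [CompleteSpace E] (ω : G → ℝ) {c : ℝ}
    (hω : ∀ v w, ω (g v * g w) = c) :
    ∑ᶠ x, ω x • (matrixUnitSymbol b g x).comp (adjoint (matrixUnitSymbol b g x)) =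
      (c * Fintype.card ι) • ContinuousLinearMap.id ℂ E := by
  rw [finsum_matrixUnitSymbol b hg (fun x A => ω x • A.comp (adjoint A)) fun x => by simp]
  simp only [adjoint_rankOne, rankOne_comp_rankOne, b.inner_eq_one, one_smul, hω,
    Fintype.sum_prod_type, Finset.sum_const, Finset.card_univ, ← Finset.smul_sum,
    b.sum_rankOne_eq_id, smul_smul, ← Nat.cast_smul_eq_nsmul ℝ]

lemma card_le_norm_of_apply_eq [DecidableEq G]
    (T : lp (fun _ : G => E) 2 →L[ℂ] lp (fun _ : G => E) 2)
    (hT : ∀ ξ h, T ξ h = ∑ᶠ x, matrixUnitSymbol b g x (ξ (x⁻¹ * h))) :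
    (Fintype.card ι : ℝ) ≤ ‖T‖ := by
  set ξ : lp (fun _ : G => E) 2 := ∑ w, lp.single 2 (g w)⁻¹ (b w)
  set η : lp (fun _ : G => E) 2 := ∑ v, lp.single 2 (g v) (b v)
  have hinj := injective_of_injective_mul_pair hg
  have hξ : ‖ξ‖ = √(Fintype.card ι) :=
    norm_sum_lpSingle_orthonormalBasis (inv_injective.comp hinj) b
  have hη : ‖η‖ = √(Fintype.card ι) := norm_sum_lpSingle_orthonormalBasis hinj b
  have hξg : ∀ w, ξ (g w)⁻¹ = b w := sum_lpSingle_apply (inv_injective.comp hinj) b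
  have hTξ : ∀ v,
      T ξ (g v) = ∑ p : ι × ι, rankOne ℂ (b p.1) (b p.2) (ξ ((g p.1 * g p.2)⁻¹ * g v)) := by
    intro v
    rw [hT, finsum_matrixUnitSymbol b hg (fun x A => A (ξ (x⁻¹ * g v))) fun x => rfl]
  have hinner : inner ℂ η (T ξ) = (Fintype.card ι : ℂ) ^ 2 := by
    classical
    rw [inner_sum_lpSingle_left]
    simp only [hTξ, inner_sum, inner_right_rankOne_apply, b.inner_eq_ite, ite_mul, one_mul,
      zero_mul, Fintype.sum_prod_type, Finset.sum_ite_irrel, Finset.sum_const_zero,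
      Finset.sum_ite_eq, Finset.mem_univ, if_true, mul_inv_rev, inv_mul_cancel_right]
    simp [hξg, sq]
  have hsq := calc (Fintype.card ι : ℝ) ^ 2 = ‖inner ℂ η (T ξ)‖ := by simp [hinner]
    _ ≤ ‖η‖ * (‖T‖ * ‖ξ‖) := (norm_inner_le_norm _ _).trans (by gcongr; exact T.le_opNorm ξ)
    _ = ‖T‖ * Fintype.card ι := by
      rw [hξ, hη, mul_left_comm, Real.mul_self_sqrt (Nat.cast_nonneg _)]
  rcases (Fintype.card ι).eq_zero_or_pos with h | h
  · simp only [h, Nat.cast_zero]; exact norm_nonneg T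
  · exact le_of_mul_le_mul_right (by rwa [sq] at hsq) (by exact_mod_cast h)

end MatrixUnitSymbol

namespace FreeGroup

variable {α : Type*}

def positiveWord (L : List α) : FreeGroup α := mk (L.map (·, true))

lemma isReduced_map_true (L : List α) : IsReduced (L.map (·, true)) := by
  rw [IsReduced, List.isChain_map]
  exact List.isChain_iff_getElem.2 fun _ _ _ => rfl

lemma positiveWord_append (L L' : List α) :
    positiveWord (L ++ L') = positiveWord L * positiveWord L' := by
  simp [positiveWord, mul_mk]

variable [DecidableEq α]

lemma toWord_positiveWord (L : List α) : (positiveWord L).toWord = L.map (·, true) := by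
  rw [positiveWord, toWord_mk, (isReduced_map_true L).reduce_eq]

lemma norm_positiveWord (L : List α) : (positiveWord L).norm = L.length := by
  simp [norm, toWord_positiveWord]

lemma positiveWord_injective : Injective (positiveWord (α := α)) := fun L L' h => by
  have := congrArg toWord h
  rw [toWord_positiveWord, toWord_positiveWord] at this
  exact List.map_injective_iff.2 (fun a b h => (Prod.mk.inj h).1) this

lemma injective_positiveWord_ofFn_mul (k : ℕ) :
    Injective fun p : (Fin k → α) × (Fin k → α) =>
      positiveWord (List.ofFn p.1) * positiveWord (List.ofFn p.2) := by
  rintro ⟨v, w⟩ ⟨v', w'⟩ h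
  simp only [← positiveWord_append] at h
  obtain ⟨hv, hw⟩ := List.append_inj (positiveWord_injective h) (by simp)
  rw [List.ofFn_injective hv, List.ofFn_injective hw]

end FreeGroup

lemma norm_real_smul_id_le {E : Type*} [NormedAddCommGroup E] [NormedSpace ℂ E]
    {c : ℝ} (hc : 0 ≤ c) : ‖c • ContinuousLinearMap.id ℂ E‖ ≤ c :=
  calc _ ≤ ‖c‖ * ‖ContinuousLinearMap.id ℂ E‖ := norm_smul_le _ _
    _ ≤ ‖c‖ * 1 := by gcongr; exact ContinuousLinearMap.norm_id_le
    _ = c := by rw [mul_one, Real.norm_of_nonneg hc]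

lemma le_of_le_mul_add_sqrt {t C a : ℝ} (ht : 0 < t) (ha : 0 ≤ a)
    (h : t ≤ C * (√(a * t) + √(a * t))) : t ≤ 4 * C ^ 2 * a := by
  have hs := Real.sq_sqrt (mul_nonneg ha ht.le)
  have h2 : t ≤ 2 * C * √(a * t) := by linarith
  nlinarith [mul_le_mul h2 h2 ht.le (by nlinarith), Real.sqrt_nonneg (a * t)]

lemma exists_mul_pow_lt_two_pow (c : ℝ) (n : ℕ) : ∃ k : ℕ, c * (1 + 2 * k) ^ n < 2 ^ k := by
  set a := |c| * 3 ^ n + 1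
  obtain ⟨k, hk, hk1⟩ := (((tendsto_pow_const_div_const_pow_of_one_lt n one_lt_two).eventually
    (gt_mem_nhds (inv_pos.2 (by positivity : 0 < a)))).and (eventually_ge_atTop 1)).exists
  have hk1' : (1 : ℝ) ≤ k := by exact_mod_cast hk1
  rw [div_lt_iff₀ (by positivity), ← div_eq_inv_mul, lt_div_iff₀ (by positivity)] at hk
  refine ⟨k, ?_⟩
  calc c * (1 + 2 * k) ^ n ≤ |c| * (3 * k) ^ n := by
        gcongr
        · exact le_abs_self c
        · linarith
    _ = (a - 1) * k ^ n := by ring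
    _ < 2 ^ k := by nlinarith [pow_pos (by positivity : (0:ℝ) < k) n]

/-- there is no pair `(d, C)` with `d` a positive integer and `C > 0`
such that for all Hilbert spaces `H` and all finitely supported `f : F₂ → B(H)`,
`‖Σ_x λ(x)⊗f(x)‖ ≤ C(‖Σ_x (1+ℓ(x))^{2d} f(x)*f(x)‖^{1/2} + ‖Σ_x (1+ℓ(x))^{2d} f(x)f(x)*‖^{1/2})`.
Here `F₂ = FreeGroup Bool` with word length `FreeGroup.norm`, and `T` with
`T ξ g = Σ_x f(x)(ξ(x⁻¹g))` is the operator `Σ_x λ(x)⊗f(x)` on `ℓ²(F₂)⊗H ≅ ℓ²(F₂;H)`. -/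
theorem stmt_13 :
    ¬ ∃ (d : ℕ) (C : ℝ), 0 < d ∧ 0 < C ∧
      ∀ (H : Type) [NormedAddCommGroup H] [InnerProductSpace ℂ H] [CompleteSpace H]
        (f : FreeGroup Bool → H →L[ℂ] H), (Function.support f).Finite →
        ∀ T : lp (fun _ : FreeGroup Bool => H) 2 →L[ℂ]
              lp (fun _ : FreeGroup Bool => H) 2,
          (∀ (ξ : lp (fun _ : FreeGroup Bool => H) 2) (g : FreeGroup Bool),
            T ξ g = ∑ᶠ x : FreeGroup Bool, f x (ξ (x⁻¹ * g))) →
          ‖T‖ ≤ C *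
            (Real.sqrt ‖∑ᶠ x : FreeGroup Bool, ((1 + x.norm : ℝ) ^ (2 * d)) •
                ((ContinuousLinearMap.adjoint (f x)).comp (f x))‖ +
             Real.sqrt ‖∑ᶠ x : FreeGroup Bool, ((1 + x.norm : ℝ) ^ (2 * d)) •
                ((f x).comp (ContinuousLinearMap.adjoint (f x)))‖) := by
  rintro ⟨d, C, -, hC, hbound⟩
  obtain ⟨k, hk⟩ := exists_mul_pow_lt_two_pow (4 * C ^ 2) (2 * d)
  set g : (Fin k → Bool) → FreeGroup Bool := fun w => FreeGroup.positiveWord (List.ofFn w)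
  have hg : Injective fun p : _ × _ => g p.1 * g p.2 :=
    FreeGroup.injective_positiveWord_ofFn_mul k
  have hweight : ∀ v w, (1 + (g v * g w).norm : ℝ) ^ (2 * d) = (1 + 2 * k) ^ (2 * d) := by
    intro v w
    simp [g, ← FreeGroup.positiveWord_append, FreeGroup.norm_positiveWord, two_mul]
  set b := EuclideanSpace.basisFun (Fin k → Bool) ℂ
  obtain ⟨T, hT⟩ := exists_lambdaTensor_sum (finite_support_matrixUnitSymbol b g)
  have hlower := card_le_norm_of_apply_eq b hg T hT
  have hupper := hbound _ _ (finite_support_matrixUnitSymbol b g) T hT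
  rw [finsum_smul_adjoint_comp_matrixUnitSymbol b hg _ hweight,
    finsum_smul_comp_adjoint_matrixUnitSymbol b hg _ hweight] at hupper
  have hcard : (Fintype.card (Fin k → Bool) : ℝ) = 2 ^ k := by simp
  rw [hcard] at hlower hupper
  have hid := norm_real_smul_id_le (E := EuclideanSpace ℂ (Fin k → Bool))
    (by positivity : 0 ≤ (1 + 2 * (k : ℝ)) ^ (2 * d) * 2 ^ k)
  have h2k := le_of_le_mul_add_sqrt (a := (1 + 2 * (k : ℝ)) ^ (2 * d)) (by positivity)
    (by positivity) (hlower.trans (hupper.trans (by gcongr)))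
  linarith
end

section
/- Let G be a finitely generated group with symmetric word length ℓ and fix integers i, j ≥ 0 and k with i + j ≥ k. For y ∈ S_k, let d_{i,j}(y) = #{(y₁,y₂) ∈ S_i × S_j : y = y₁y₂}. If G is δ-hyperbolic and i + j = k, then d_{i,j}(y) ≤ #B_δ for every y ∈ S_k. -/
/-- if `G` is δ-hyperbolic and `i + j = k`, then for every `y` with
`ℓ(y) = k`, the number `d_{i,j}(y)` of factorizations `y = y₁y₂` with `ℓ(y₁) = i`,
`ℓ(y₂) = j` is at most `#B_δ`. -/
theorem stmt_19 {G : Type*} [Group G] (ℓ : G → ℕ) (hℓ : IsWordLength ℓ)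
    (hfin : ∀ s : ℕ, {g : G | ℓ g ≤ s}.Finite)
    (δ : ℕ) (hhyp : IsHyperbolic ℓ δ)
    (i j k : ℕ) (hij : i + j = k)
    (y : G) (hy : ℓ y = k) :
    {q : G × G | ℓ q.1 = i ∧ ℓ q.2 = j ∧ q.1 * q.2 = y}.ncard ≤
      {g : G | ℓ g ≤ δ}.ncard := by
  set S : Set (G × G) := {q : G × G | ℓ q.1 = i ∧ ℓ q.2 = j ∧ q.1 * q.2 = y}
  rcases S.eq_empty_or_nonempty with hS | ⟨q₀, hq₀⟩
  · simp [hS]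
  -- key: for any two factorizations, ℓ(y₁⁻¹ y₁') ≤ δ
  have key : ∀ q ∈ S, ∀ q' ∈ S, ℓ (q.1⁻¹ * q'.1) ≤ δ := by
    rintro ⟨a, b⟩ ⟨ha, hb, hab⟩ ⟨a', b'⟩ ⟨ha', hb', hab'⟩
    show ℓ (a⁻¹ * a') ≤ δ
    have h := hhyp 1 y a a'
    have e1 : ℓ ((1 : G)⁻¹ * y) = k := by simpa using hy
    have e2 : ℓ ((1 : G)⁻¹ * a) = i := by simpa using ha
    have e3 : ℓ ((1 : G)⁻¹ * a') = i := by simpa using ha'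
    have e4 : ℓ (y⁻¹ * a') = j := by
      have : y⁻¹ * a' = b'⁻¹ := by rw [← hab']; group
      rw [this, hℓ.len_inv, hb']
    have e5 : ℓ (y⁻¹ * a) = j := by
      have : y⁻¹ * a = b⁻¹ := by rw [← hab]; group
      rw [this, hℓ.len_inv, hb]
    rw [e1, e2, e3, e4, e5, max_self] at h
    omega
  refine Set.ncard_le_ncard_of_injOn (fun q => q₀.1⁻¹ * q.1) (fun q hq => key q₀ hq₀ q hq) ?_ (hfin δ)
  · rintro ⟨a, b⟩ ⟨ha, hb, hab⟩ ⟨a', b'⟩ ⟨ha', hb', hab'⟩ h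
    have h1 : a = a' := by
      have := mul_left_cancel (a := q₀.1⁻¹) h
      simpa using this
    have h2 : b = b' := by
      subst h1
      exact mul_left_cancel (hab.trans hab'.symm)
    simp [h1, h2]
end
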